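/- arXiv:0901.1883 — 5 statements merged into one kernel-verified Lean document; each statement's English description precedes it below -/
import Mathlib

section
/- For every integer n ≥ 1 and integer r ≥ 0, the n×n Hankel determinant H_n^{(r)}[ζ] = det(ζ(i+j+r))_{1≤i,j≤n} equals (1/n!) · ∑_{m₁,…,m_n ≥ 1} (m₁ m₂ ⋯ m_n)^{−(2n+r)} · ∏_{i<j} (m_i − m_j)². -/
/-
The entries are moments: `ζ(i + j + r) = ∑ₘ m⁻ⁱ · m^{-(j + r)}`. Expanding the determinant of such a
moment matrix and symmetrising over the `n!` reorderings of the summation indices gives Andreief's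
identity `n! · det (∑ₘ fᵢ(m) gⱼ(m)) = ∑_{m₁,…,mₙ} det (fᵢ(mₖ)) · det (gⱼ(mₖ))`. Here both
determinants are, up to powers of the `mₖ`, Vandermonde determinants in the `1 / mₖ`, and
`∏_{i<j} (1/mⱼ - 1/mᵢ) = ∏_{i<j} (mᵢ - mⱼ) / ∏ₖ mₖ^{n-1}`.
-/

open Finset Matrix Equiv

section PiProduct

variable {R α : Type*} [NormedCommRing R]

theorem summable_norm_prod_pi {n : ℕ} {f : Fin n → α → R}
    (hf : ∀ i, Summable fun a => ‖f i a‖) :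
    Summable fun m : Fin n → α => ‖∏ i, f i (m i)‖ := by
  induction n with
  | zero => exact .of_finite
  | succ n ih =>
    have h := (hf 0).mul_norm (ih fun i => hf i.succ)
    refine ((Fin.consEquiv fun _ => α).symm.summable_iff.2 h).congr fun m => ?_
    simp [Fin.prod_univ_succ, Fin.tail]

theorem hasSum_prod_pi [CompleteSpace R] {n : ℕ} {f : Fin n → α → R}
    (hf : ∀ i, Summable fun a => ‖f i a‖) :
    HasSum (fun m : Fin n → α => ∏ i, f i (m i)) (∏ i, ∑' a, f i a) := by
  induction n with
  | zero => simp
  | succ n ih =>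
    have htail := summable_norm_prod_pi fun i => hf i.succ
    have h := ((hf 0).mul_norm htail).of_norm.hasSum
    rw [← tsum_mul_tsum_of_summable_norm (hf 0) htail, (ih fun i => hf i.succ).tsum_eq,
      ← (Fin.consEquiv fun _ => α).symm.hasSum_iff] at h
    rw [Fin.prod_univ_succ]
    exact h.congr_fun fun m => by simp [Fin.prod_univ_succ, Fin.tail]

end PiProduct

theorem sum_perm_det_submatrix_mul_prod {ι R : Type*} [Fintype ι] [DecidableEq ι] [CommRing R]
    (A B : Matrix ι ι R) :
    ∑ τ : Perm ι, (A.submatrix id τ).det * ∏ k, B k (τ k) = A.det * B.det := by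
  rw [← det_transpose B, det_apply' Bᵀ, mul_sum]
  refine sum_congr rfl fun τ _ => ?_
  simp only [det_permute', transpose_apply]
  ring

theorem tsum_sum_comp_perm {ι α M : Type*} [Fintype ι] [DecidableEq ι] [AddCommMonoid M]
    [TopologicalSpace M] [ContinuousAdd M] [T2Space M] {φ : (ι → α) → M} (hφ : Summable φ) :
    ∑' m, ∑ τ : Perm ι, φ (m ∘ τ) = (Fintype.card ι).factorial • ∑' m, φ m := by
  have hsummable (τ : Perm ι) : Summable fun m : ι → α => φ (m ∘ τ) :=
    (arrowCongr τ.symm (.refl α)).summable_iff.2 hφ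
  have htsum (τ : Perm ι) : ∑' m : ι → α, φ (m ∘ τ) = ∑' m, φ m :=
    (arrowCongr τ.symm (.refl α)).tsum_eq φ
  rw [Summable.tsum_finsetSum fun τ _ => hsummable τ, sum_congr rfl fun τ _ => htsum τ,
    sum_const, card_univ, Fintype.card_perm]

section Andreief

variable {R α : Type*} [NormedCommRing R] [CompleteSpace R] {n : ℕ}

theorem hasSum_det_mul_prod (f g : Fin n → α → R)
    (hfg : ∀ i j, Summable fun a => ‖f i a * g j a‖) :
    HasSum (fun m : Fin n → α => (of fun i k => f i (m k)).det * ∏ k, g k (m k))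
      (of fun i j => ∑' a, f i a * g j a).det := by
  rw [det_apply']
  have hσ (σ : Perm (Fin n)) :=
    (hasSum_prod_pi fun i => hfg (σ i) i).mul_left (Perm.sign σ : R)
  refine (hasSum_sum fun σ _ => hσ σ).congr_fun fun m => ?_
  simp only [det_apply', of_apply, sum_mul, prod_mul_distrib, mul_assoc]

theorem factorial_mul_det_tsum_mul (f g : Fin n → α → R)
    (hfg : ∀ i j, Summable fun a => ‖f i a * g j a‖) :
    (n.factorial : R) * (of fun i j => ∑' a, f i a * g j a).det =
      ∑' m : Fin n → α, (of fun i k => f i (m k)).det * (of fun j k => g j (m k)).det := by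
  have h := hasSum_det_mul_prod f g hfg
  have hsym := tsum_sum_comp_perm h.summable
  rw [Fintype.card_fin] at hsym
  rw [← h.tsum_eq, ← nsmul_eq_mul, ← hsym]
  exact tsum_congr fun m =>
    sum_perm_det_submatrix_mul_prod (of fun i k => f i (m k)) (of fun j k => g j (m k))

end Andreief

theorem prod_prod_Ioi_mul_eq_prod_pow {M : Type*} [CommMonoid M] {n : ℕ} (x : Fin n → M) :
    ∏ i, ∏ j ∈ Ioi i, (x i * x j) = ∏ i, x i ^ (n - 1) := by
  have hleft : ∏ i, ∏ _j ∈ Ioi i, x i = ∏ i, x i ^ (n - 1 - i) :=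
    prod_congr rfl fun i _ => by rw [prod_const, Fin.card_Ioi]
  have hright : ∏ i, ∏ j ∈ Ioi i, x j = ∏ j, x j ^ (j : ℕ) := by
    rw [prod_comm' (t' := univ) (s' := Iio) (by simp)]
    exact prod_congr rfl fun j _ => by rw [prod_const, Fin.card_Iio]
  rw [prod_congr rfl fun i _ => prod_mul_distrib, prod_mul_distrib, hleft, hright,
    ← prod_mul_distrib]
  exact prod_congr rfl fun i _ => by rw [← pow_add]; congr 1; omega

theorem det_vandermonde_inv {K : Type*} [Field K] {n : ℕ} {v : Fin n → K}
    (hv : ∀ i, v i ≠ 0) :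
    (vandermonde fun i => (v i)⁻¹).det =
      (∏ i, ∏ j ∈ Ioi i, (v i - v j)) / ∏ i, v i ^ (n - 1) := by
  have hpair (i j : Fin n) : (v j)⁻¹ - (v i)⁻¹ = (v i - v j) / (v i * v j) := by
    field_simp [hv i, hv j]
  simp only [det_vandermonde, hpair, prod_div_distrib, prod_prod_Ioi_mul_eq_prod_pow]

theorem det_of_pow_add {R : Type*} [CommRing R] {n : ℕ} (v : Fin n → R) (s : ℕ) :
    (of fun i k : Fin n => v k ^ ((i : ℕ) + s)).det =
      (∏ k, v k ^ s) * (vandermonde v).det := by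
  rw [← det_transpose (vandermonde v), ← det_mul_row]
  congr 1
  ext i k
  simp [pow_add, mul_comm]

theorem prod_inv_pow_mul_det_vandermonde_inv_sq {K : Type*} [Field K] {n : ℕ} (r : ℕ)
    {v : Fin n → K} (hv : ∀ i, v i ≠ 0) :
    (∏ i, (v i)⁻¹ ^ (r + 2)) * (vandermonde fun i => (v i)⁻¹).det ^ 2 =
      (∏ i, (v i ^ (2 * n + r))⁻¹) * ∏ i, ∏ j ∈ Ioi i, (v i - v j) ^ 2 := by
  have hexp (i : Fin n) :
      (v i ^ (2 * n + r))⁻¹ = (v i)⁻¹ ^ (r + 2) / (v i ^ (n - 1)) ^ 2 := by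
    have := i.pos
    rw [← pow_mul, inv_pow, div_eq_mul_inv, ← mul_inv, ← pow_add]
    congr 2
    omega
  simp only [det_vandermonde_inv hv, hexp, prod_div_distrib, prod_pow, div_pow]
  ring

theorem riemannZeta_nat_eq_tsum_pnat {k : ℕ} (hk : 1 < k) :
    riemannZeta k = ∑' a : ℕ+, ((a : ℂ) ^ k)⁻¹ := by
  rw [zeta_nat_eq_tsum_of_gt_one hk, ← tsum_pnat_eq_tsum_of_eq_zero (by simp; omega)]
  simp only [one_div]

theorem summable_norm_inv_pnat_pow {k : ℕ} (hk : 1 < k) :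
    Summable fun a : ℕ+ => ‖((a : ℂ) ^ k)⁻¹‖ := by
  have hnat : Summable fun a : ℕ => ‖((a : ℂ) ^ k)⁻¹‖ :=
    (Real.summable_one_div_nat_pow.2 hk).congr fun a => by simp
  exact hnat.comp_injective PNat.coe_injective

theorem hankel_zeta_sum_general (n r : ℕ) :
    Matrix.det (Matrix.of fun i j : Fin n =>
        riemannZeta ((i : ℕ) + 1 + ((j : ℕ) + 1) + r)) =
      (1 / (n.factorial : ℂ)) *
        ∑' m : Fin n → ℕ+,
          (∏ i, ((m i : ℂ) ^ (2 * n + r))⁻¹) *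
            ∏ i, ∏ j ∈ Finset.Ioi i, ((m i : ℂ) - (m j : ℂ)) ^ 2 := by
  set x : ℕ+ → ℂ := fun a => (a : ℂ)⁻¹
  have hterm (i j : Fin n) (a : ℕ+) :
      x a ^ (i : ℕ) * x a ^ ((j : ℕ) + (r + 2)) =
        ((a : ℂ) ^ ((i : ℕ) + 1 + ((j : ℕ) + 1) + r))⁻¹ := by
    rw [← pow_add, inv_pow]
    ring_nf
  have hhankel : (of fun i j : Fin n => riemannZeta ((i : ℕ) + 1 + ((j : ℕ) + 1) + r)) =
      of fun i j : Fin n => ∑' a, x a ^ (i : ℕ) * x a ^ ((j : ℕ) + (r + 2)) := by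
    ext i j
    simp only [of_apply, hterm]
    exact_mod_cast riemannZeta_nat_eq_tsum_pnat (by omega)
  have hsummable (i j : Fin n) :
      Summable fun a => ‖x a ^ (i : ℕ) * x a ^ ((j : ℕ) + (r + 2))‖ := by
    simpa only [hterm] using summable_norm_inv_pnat_pow (by omega)
  have hsummand (m : Fin n → ℕ+) :
      (of fun i k : Fin n => x (m k) ^ (i : ℕ)).det *
        (of fun j k : Fin n => x (m k) ^ ((j : ℕ) + (r + 2))).det =
        (∏ i, ((m i : ℂ) ^ (2 * n + r))⁻¹) * ∏ i, ∏ j ∈ Ioi i, ((m i : ℂ) - (m j : ℂ)) ^ 2 := by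
    have hV : (of fun i k : Fin n => x (m k) ^ (i : ℕ)) = (vandermonde fun k => x (m k))ᵀ :=
      rfl
    rw [hV, det_transpose, det_of_pow_add,
      ← prod_inv_pow_mul_det_vandermonde_inv_sq r (v := fun i => (m i : ℂ)) fun i => by simp]
    ring
  have key := factorial_mul_det_tsum_mul _ _ hsummable
  rw [tsum_congr hsummand] at key
  rw [hhankel, ← key, one_div, inv_mul_cancel_left₀ (Nat.cast_ne_zero.2 n.factorial_ne_zero)]

theorem hankel_zeta_sum (n r : ℕ) (hn : 1 ≤ n) :
    Matrix.det (Matrix.of fun i j : Fin n =>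
        riemannZeta ((i : ℕ) + 1 + ((j : ℕ) + 1) + r)) =
      (1 / (n.factorial : ℂ)) *
        ∑' m : Fin n → ℕ+,
          (∏ i, ((m i : ℂ) ^ (2 * n + r))⁻¹) *
            ∏ i, ∏ j ∈ Finset.Ioi i, ((m i : ℂ) - (m j : ℂ)) ^ 2 :=
  hankel_zeta_sum_general n r
end

section
/- If f : ℕ → ℝ satisfies f(m) > 0 for every positive integer m and the Dirichlet series F(s) = ∑_{m≥1} f(m)/m^s converges absolutely for s ≥ 2, then for all n ≥ 1 and r ≥ 0 the Hankel determinant det(F(i+j+r))_{1≤i,j≤n} is strictly positive. -/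
/-!
Writing `F (i + j + r) = ∑' m, (f m / m ^ (r + 2)) * (1 / m) ^ (i - 1) * (1 / m) ^ (j - 1)`
exhibits the Hankel matrix as a Gram matrix `∑' m, c m • v m v mᵀ` with positive weights and
moment vectors `v m = (1, 1/m, …, 1/m ^ (n - 1))`. Its quadratic form at `x` is
`∑' m, c m * (v m ⬝ᵥ x) ^ 2`, which is positive unless `v m ⬝ᵥ x = 0` for every `m`, i.e. unless
the polynomial with coefficients `x` vanishes at the infinitely many points `1 / m`.
-/

open Finset Matrix

theorem exists_pow_dotProduct_ne_zero {K α : Type*} [Field K] [Infinite α] {t : α → K}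
    (ht : Function.Injective t) {n : ℕ} {x : Fin n → K} (hx : x ≠ 0) :
    ∃ a, (fun i : Fin n => t a ^ (i : ℕ)) ⬝ᵥ x ≠ 0 := by
  by_contra! h
  set nodes : Fin n → K := fun i => t (Infinite.natEmbedding α i)
  have hnodes : Function.Injective nodes :=
    ht.comp ((Infinite.natEmbedding α).injective.comp Fin.val_injective)
  exact det_vandermonde_ne_zero_iff.mpr hnodes <|
    exists_mulVec_eq_zero_iff.mp ⟨x, hx, funext fun i => h _⟩

noncomputable def weightedGram {ι α : Type*} (c : α → ℝ) (v : α → ι → ℝ) : Matrix ι ι ℝ :=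
  of fun i j => ∑' k, c k * v k i * v k j

section WeightedGram

variable {ι α : Type*} [Fintype ι] {c : α → ℝ} {v : α → ι → ℝ}

theorem hasSum_dotProduct_weightedGram_mulVec
    (hs : ∀ i j, Summable fun k => c k * v k i * v k j) (x : ι → ℝ) :
    HasSum (fun k => c k * (v k ⬝ᵥ x) ^ 2) (x ⬝ᵥ (weightedGram c v *ᵥ x)) := by
  have hterm : ∀ k, c k * (v k ⬝ᵥ x) ^ 2 = ∑ i, ∑ j, x i * (c k * v k i * v k j) * x j := by
    intro k
    rw [sq, dotProduct, sum_mul_sum, mul_sum]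
    refine sum_congr rfl fun i _ => ?_
    rw [mul_sum]
    exact sum_congr rfl fun j _ => by ring
  have hform : x ⬝ᵥ (weightedGram c v *ᵥ x) =
      ∑ i, ∑ j, x i * (∑' k, c k * v k i * v k j) * x j := by
    simp only [dotProduct, mulVec, weightedGram, of_apply, mul_sum]
    exact sum_congr rfl fun i _ => sum_congr rfl fun j _ => by ring
  rw [funext hterm, hform]
  exact hasSum_sum fun i _ => hasSum_sum fun j _ =>
    ((hs i j).hasSum.mul_left (x i)).mul_right (x j)

theorem weightedGram_posDef (hc : ∀ k, 0 ≤ c k)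
    (hs : ∀ i j, Summable fun k => c k * v k i * v k j)
    (hv : ∀ x, x ≠ 0 → ∃ k, 0 < c k ∧ v k ⬝ᵥ x ≠ 0) :
    (weightedGram c v).PosDef := by
  refine .of_dotProduct_mulVec_pos ?_ fun x hx => ?_
  · ext i j
    simp only [weightedGram, conjTranspose_apply, of_apply, star_trivial]
    exact tsum_congr fun k => by ring
  · obtain ⟨k, hck, hvk⟩ := hv x hx
    have hQ := hasSum_dotProduct_weightedGram_mulVec hs x
    rw [star_trivial, ← hQ.tsum_eq]
    exact hQ.summable.tsum_pos (fun k => mul_nonneg (hc k) (sq_nonneg _)) k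
      (mul_pos hck (pow_two_pos_of_ne_zero hvk))

end WeightedGram

theorem hankel_dirichlet_pos_general (f : ℕ → ℝ) (hf : ∀ m : ℕ, 0 < m → 0 < f m)
    (hsum : ∀ s : ℕ, 2 ≤ s → Summable (fun m : ℕ+ => f m / (m : ℝ) ^ s))
    (F : ℕ → ℝ) (hF : ∀ s : ℕ, 2 ≤ s → F s = ∑' m : ℕ+, f m / (m : ℝ) ^ s)
    (n r : ℕ) :
    0 < Matrix.det (Matrix.of fun i j : Fin n =>
        F ((i : ℕ) + 1 + ((j : ℕ) + 1) + r)) := by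
  set c : ℕ+ → ℝ := fun m => f m / (m : ℝ) ^ (r + 2)
  set v : ℕ+ → Fin n → ℝ := fun m i => (m : ℝ)⁻¹ ^ (i : ℕ)
  have hc : ∀ m, 0 < c m := fun m => div_pos (hf m m.pos) (by positivity)
  have hentry : ∀ (m : ℕ+) (i j : Fin n),
      f m / (m : ℝ) ^ ((i : ℕ) + 1 + ((j : ℕ) + 1) + r) = c m * v m i * v m j :=
    fun m i j => by simp only [c, v]; ring
  have hhankel : (of fun i j : Fin n => F ((i : ℕ) + 1 + ((j : ℕ) + 1) + r)) =
      weightedGram c v := by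
    ext i j
    rw [of_apply, hF _ (by omega)]
    exact tsum_congr (hentry · i j)
  have hinv : Function.Injective fun m : ℕ+ => (m : ℝ)⁻¹ :=
    inv_injective.comp (Nat.cast_injective.comp PNat.coe_injective)
  rw [hhankel]
  refine (weightedGram_posDef (fun m => (hc m).le)
    (fun i j => (hsum _ (by omega)).congr (hentry · i j)) fun x hx => ?_).det_pos
  obtain ⟨m, hm⟩ := exists_pow_dotProduct_ne_zero hinv hx
  exact ⟨m, hc m, hm⟩

theorem hankel_dirichlet_pos (f : ℕ → ℝ) (hf : ∀ m : ℕ, 0 < m → 0 < f m)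
    (hsum : ∀ s : ℕ, 2 ≤ s → Summable (fun m : ℕ+ => f m / (m : ℝ) ^ s))
    (F : ℕ → ℝ) (hF : ∀ s : ℕ, 2 ≤ s → F s = ∑' m : ℕ+, f m / (m : ℝ) ^ s)
    (n r : ℕ) (hn : 1 ≤ n) :
    0 < Matrix.det (Matrix.of fun i j : Fin n =>
        F ((i : ℕ) + 1 + ((j : ℕ) + 1) + r)) :=
  hankel_dirichlet_pos_general f hf hsum F hF n r
end

section
/- The Selberg integral S_n(1,1,1) = ∫_{[0,1]^n} ∏_{i<j}(t_i − t_j)² dt₁⋯dt_n equals ∏_{j=1}^n ( (j−1)!² · j! / (n+j−1)! ). -/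
/-!
The integrand is the square of the Vandermonde determinant `det (t_j ^ i)`. Andréief's identity
turns the integral of a product of two determinants `det (f_i (t_j)) * det (g_i (t_j))` over a
product measure into `n!` times the determinant of the matrix `(∫ f_i g_j)`, which here is the
Hilbert matrix `(1 / (i + j + 1))`. That is a Cauchy matrix `(1 / (x_i + y_j))`, whose determinant
follows by induction from one step of Gaussian elimination: the Schur complement of the corner
entry is again a Cauchy matrix, with rows and columns rescaled.
-/

open Finset Matrix Equiv MeasureTheory
open scoped Nat

namespace Matrix

theorem det_vandermonde_succ {R : Type*} [CommRing R] {n : ℕ} (v : Fin (n + 1) → R) :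
    (vandermonde v).det = (∏ i : Fin n, (v i.succ - v 0)) * (vandermonde (v ∘ Fin.succ)).det := by
  simp only [det_vandermonde, Fin.prod_univ_succ, Fin.prod_Ioi_zero, Fin.prod_Ioi_succ,
    Function.comp_apply]

section Field

variable {K : Type*} [Field K]

theorem det_succ_eq_mul_det_schur {n : ℕ} (M : Matrix (Fin (n + 1)) (Fin (n + 1)) K)
    (h : M 0 0 ≠ 0) :
    M.det = M 0 0 *
      (of fun i j : Fin n => M i.succ j.succ - M i.succ 0 / M 0 0 * M 0 j.succ).det := by
  set c : Fin (n + 1) → K := fun i => if i = 0 then 0 else M i 0 / M 0 0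
  set N : Matrix (Fin (n + 1)) (Fin (n + 1)) K := of fun i j => M i j - c i * M 0 j
  have hN0 : ∀ j, N 0 j = M 0 j := by simp [N, c]
  have hdet : M.det = N.det :=
    det_eq_of_forall_row_eq_smul_add_const c 0 (by simp [c]) fun i j => by simp [N, hN0]
  have hcol : ∀ i : Fin n, N i.succ 0 = 0 := fun i => by
    simp [N, c, Fin.succ_ne_zero, div_mul_cancel₀ _ h]
  rw [hdet, det_succ_column_zero, Fin.sum_univ_succ, Finset.sum_eq_zero fun i _ => by simp [hcol]]
  simp only [Fin.val_zero, pow_zero, one_mul, hN0, Fin.succAbove_zero, add_zero]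
  rfl

theorem det_cauchy_mul_prod {n : ℕ} (x y : Fin n → K) (h : ∀ i j, x i + y j ≠ 0) :
    (of fun i j => (x i + y j)⁻¹).det * ∏ i, ∏ j, (x i + y j) =
      (vandermonde x).det * (vandermonde y).det := by
  induction n with
  | zero => simp
  | succ n ih =>
    have hschur : (of fun i j => (x i + y j)⁻¹).det = (x 0 + y 0)⁻¹ *
        ((∏ i : Fin n, (x i.succ - x 0) / (x i.succ + y 0)) *
          ((∏ j : Fin n, (y j.succ - y 0) / (x 0 + y j.succ)) *
            (of fun i j : Fin n => (x i.succ + y j.succ)⁻¹).det)) := by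
      rw [det_succ_eq_mul_det_schur _ (by simpa using h 0 0), ← det_mul_row, ← det_mul_column]
      congr 2
      ext i j
      simp only [of_apply]
      field_simp [h 0 j.succ, h i.succ 0, h i.succ j.succ]
      ring
    have hminor := ih (x ∘ Fin.succ) (y ∘ Fin.succ) fun i j => h i.succ j.succ
    rw [hschur, det_vandermonde_succ x, det_vandermonde_succ y, mul_mul_mul_comm, ← hminor]
    simp only [Function.comp_apply, Fin.prod_univ_succ, prod_div_distrib, prod_mul_distrib]
    field_simp [h 0 0, prod_ne_zero_iff.mpr fun i _ => h (Fin.succ i) 0,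
      prod_ne_zero_iff.mpr fun j _ => h 0 (Fin.succ j)]

end Field

theorem sum_sign_mul_sign_mul_prod {ι R : Type*} [Fintype ι] [DecidableEq ι] [CommRing R]
    (C : Matrix ι ι R) :
    ∑ σ : Perm ι, ∑ τ : Perm ι, ((Perm.sign σ : ℤ) : R) * (Perm.sign τ : ℤ) * ∏ j, C (σ j) (τ j) =
      (Fintype.card ι)! * C.det := by
  have hrow : ∀ σ : Perm ι,
      ∑ τ : Perm ι, ((Perm.sign τ : ℤ) : R) * ∏ j, C (σ j) (τ j) = Perm.sign σ * C.det := by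
    intro σ
    rw [← det_permute, ← det_transpose, det_apply']
    rfl
  have hsign : ∀ σ : Perm ι, ((Perm.sign σ : ℤ) : R) * (Perm.sign σ : ℤ) = 1 := by
    intro σ
    rw [← Int.cast_mul, ← Units.val_mul, Int.units_mul_self, Units.val_one, Int.cast_one]
  calc _ = ∑ σ : Perm ι, ((Perm.sign σ : ℤ) : R) *
          ∑ τ : Perm ι, ((Perm.sign τ : ℤ) : R) * ∏ j, C (σ j) (τ j) := by
        simp only [mul_assoc, Finset.mul_sum]
    _ = ∑ _σ : Perm ι, C.det := by simp only [hrow, ← mul_assoc, hsign, one_mul]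
    _ = _ := by simp [Fintype.card_perm]

theorem det_vandermonde_natCast {R : Type*} [CommRing R] (n : ℕ) :
    (vandermonde fun i : Fin n => ((i : ℕ) : R)).det = ∏ j ∈ range n, (j ! : R) := by
  cases n with
  | zero => simp
  | succ n =>
    rw [det_vandermonde_id_eq_superFactorial, ← Nat.prod_range_succ_factorial, Nat.cast_prod]

theorem factorial_mul_prod_fin_add_add_one {R : Type*} [CommRing R] (i n : ℕ) :
    (i ! : R) * ∏ j : Fin n, ((i : R) + (j : ℕ) + 1) = ((i + n)! : R) := by
  rw [Fin.prod_univ_eq_prod_range (fun j => (i : R) + j + 1), ← Nat.factorial_mul_ascFactorial,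
    Nat.ascFactorial_eq_prod_range]
  push_cast
  congr 1
  exact prod_congr rfl fun j _ => by ring

theorem det_hilbert {K : Type*} [Field K] [CharZero K] (n : ℕ) :
    (of fun i j : Fin n => ((i : ℕ) + (j : ℕ) + 1 : K)⁻¹).det =
      ∏ j ∈ range n, (j ! : K) ^ 3 / ((n + j)! : K) := by
  have hcauchy := det_cauchy_mul_prod (fun i : Fin n => ((i : ℕ) : K)) (fun j => (j : ℕ) + 1)
    fun i j => by norm_cast
  simp only [det_vandermonde_add, det_vandermonde_natCast, ← add_assoc] at hcauchy
  have hfact : ∀ m : ℕ, (m ! : K) ≠ 0 := fun m => mod_cast m.factorial_ne_zero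
  have hrow : ∀ i : Fin n, ∏ j : Fin n, (((i : ℕ) : K) + (j : ℕ) + 1) = ((i + n)! : K) / i ! :=
    fun i => by rw [← factorial_mul_prod_fin_add_add_one, mul_div_cancel_left₀ _ (hfact _)]
  simp only [hrow, Fin.prod_univ_eq_prod_range (fun i => ((i + n)! : K) / i !)] at hcauchy
  refine mul_right_cancel₀ (prod_ne_zero_iff.mpr fun i _ => div_ne_zero (hfact _) (hfact _))
    (hcauchy.trans ?_)
  rw [← prod_mul_distrib, ← prod_mul_distrib]
  refine prod_congr rfl fun j _ => ?_
  rw [add_comm j n]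
  field_simp [hfact]

theorem prod_Ioi_sub_sq_eq_det_mul_det {R : Type*} [CommRing R] {n : ℕ} (t : Fin n → R) :
    ∏ i, ∏ j ∈ Ioi i, (t i - t j) ^ 2 =
      (of fun i j : Fin n => t j ^ (i : ℕ)).det * (of fun i j : Fin n => t j ^ (i : ℕ)).det := by
  have hV : (of fun i j : Fin n => t j ^ (i : ℕ)).det = (vandermonde t).det := by
    rw [← det_transpose]
    rfl
  rw [hV, det_vandermonde, ← sq, ← prod_pow]
  refine prod_congr rfl fun i _ => ?_
  rw [← prod_pow]
  exact prod_congr rfl fun j _ => by ring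

end Matrix

namespace MeasureTheory

theorem integral_det_mul_det_pi {ι α 𝕜 : Type*} [Fintype ι] [DecidableEq ι] [RCLike 𝕜]
    [MeasurableSpace α] (μ : Measure α) [SigmaFinite μ] (f g : ι → α → 𝕜)
    (hfg : ∀ i j, Integrable (fun x => f i x * g j x) μ) :
    ∫ t, (of fun i j => f i (t j)).det * (of fun i j => g i (t j)).det ∂(Measure.pi fun _ => μ) =
      (Fintype.card ι)! * (of fun i j => ∫ x, f i x * g j x ∂μ).det := by
  have hexpand : ∀ t : ι → α,
      (of fun i j => f i (t j)).det * (of fun i j => g i (t j)).det =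
        ∑ σ : Perm ι, ∑ τ : Perm ι, ((Perm.sign σ : ℤ) : 𝕜) * (Perm.sign τ : ℤ) *
          ∏ j, f (σ j) (t j) * g (τ j) (t j) := by
    intro t
    simp only [det_apply', sum_mul_sum, prod_mul_distrib, of_apply]
    exact sum_congr rfl fun σ _ => sum_congr rfl fun τ _ => by ring
  have hint : ∀ σ τ : Perm ι, Integrable (fun t : ι → α => ∏ j, f (σ j) (t j) * g (τ j) (t j))
      (Measure.pi fun _ => μ) := fun σ τ => Integrable.fintype_prod fun j => hfg _ _
  simp_rw [hexpand]
  rw [integral_finsetSum _ fun σ _ => integrable_finsetSum _ fun τ _ => (hint σ τ).const_mul _]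
  refine (sum_congr rfl fun σ _ => ?_).trans (sum_sign_mul_sign_mul_prod _)
  rw [integral_finsetSum _ fun τ _ => (hint σ τ).const_mul _]
  refine sum_congr rfl fun τ _ => ?_
  rw [integral_const_mul, integral_fintype_prod_eq_prod (fun j x => f (σ j) x * g (τ j) x)]
  rfl

theorem integral_Icc_zero_one_pow_mul_pow (i j : ℕ) :
    ∫ x in Set.Icc (0 : ℝ) 1, x ^ i * x ^ j = ((i : ℝ) + j + 1)⁻¹ := by
  rw [integral_Icc_eq_integral_Ioc, ← intervalIntegral.integral_of_le zero_le_one]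
  simp_rw [← pow_add, integral_pow]
  push_cast
  ring

end MeasureTheory

theorem selberg_integral_111_general (n : ℕ) :
    (∫ t in Set.pi Set.univ (fun _ : Fin n => Set.Icc (0 : ℝ) 1),
        ∏ i, ∏ j ∈ Finset.Ioi i, (t i - t j) ^ 2) =
      ∏ j ∈ Finset.range n,
        ((j.factorial : ℝ) ^ 2 * ((j + 1).factorial : ℝ) / ((n + j).factorial : ℝ)) := by
  have hint : ∀ i j : Fin n, Integrable (fun x : ℝ => x ^ (i : ℕ) * x ^ (j : ℕ))
      (volume.restrict (Set.Icc 0 1)) :=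
    fun i j => (by fun_prop : Continuous fun x : ℝ => x ^ (i : ℕ) * x ^ (j : ℕ)).integrableOn_Icc
  rw [volume_pi, Measure.restrict_pi_pi]
  simp_rw [prod_Ioi_sub_sq_eq_det_mul_det]
  rw [integral_det_mul_det_pi _ _ _ hint]
  simp_rw [integral_Icc_zero_one_pow_mul_pow]
  rw [det_hilbert, Fintype.card_fin, ← prod_range_add_one_eq_factorial n, Nat.cast_prod,
    ← prod_mul_distrib]
  refine prod_congr rfl fun j _ => ?_
  rw [Nat.factorial_succ]
  push_cast
  ring

theorem selberg_integral_111 (n : ℕ) (hn : 1 ≤ n) :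
    (∫ t in Set.pi Set.univ (fun _ : Fin n => Set.Icc (0 : ℝ) 1),
        ∏ i, ∏ j ∈ Finset.Ioi i, (t i - t j) ^ 2) =
      ∏ j ∈ Finset.range n,
        ((j.factorial : ℝ) ^ 2 * ((j + 1).factorial : ℝ) / ((n + j).factorial : ℝ)) :=
  selberg_integral_111_general n
end

section
/- Define ρ : ℝ → ℝ by ρ(x) = 1 for 0 ≤ x ≤ 1/2, ρ(x) = (2/π)(arctan(1/√(2x−1)) − √(2x−1)/(2x)) for x > 1/2, and ρ(x) = 0 for x < 0. Then ∫_0^∞ ρ(x) dx = 1. -/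
/-!
On `(1/2, ∞)` the density `ρ` is the derivative of
`F x = x - 2/π * ((x - 1) * arctan √(2x-1) + √(2x-1)/2)`, which equals `1/2` at `x = 1/2`.
Writing `arctan √(2x-1) = π/2 - arctan u` with `u = 1/√(2x-1)`, the bounds
`u / (1 + u²) ≤ arctan u ≤ u` squeeze `F x` between `1 - (2/π) u` and `1`, so `F → 1`.
The first bound also gives `ρ ≥ 0`, so the improper fundamental theorem of calculus yields
`∫_{1/2}^∞ ρ = 1/2`, and `ρ = 1` on `[0, 1/2]` contributes the other half.
-/

noncomputable def rho : ℝ → ℝ := fun x =>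
  if x < 0 then 0
  else if x ≤ 1 / 2 then 1
  else (2 / Real.pi) * (Real.arctan (1 / Real.sqrt (2 * x - 1)) - Real.sqrt (2 * x - 1) / (2 * x))

open Real MeasureTheory Filter Set Topology

namespace Real

theorem arctan_le_self {u : ℝ} (hu : 0 ≤ u) : arctan u ≤ u := by
  simpa only [tan_arctan] using le_tan (arctan_nonneg.2 hu) (arctan_lt_pi_div_two u)

theorem div_one_add_sq_le_arctan {u : ℝ} (hu : 0 ≤ u) : u / (1 + u ^ 2) ≤ arctan u := by
  have hsin : sin (2 * arctan u) = 2 * (u / (1 + u ^ 2)) := by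
    rw [sin_two_mul, sin_arctan, cos_arctan, mul_assoc, div_mul_div_comm, mul_one,
      mul_self_sqrt (by positivity)]
  have := sin_le (mul_nonneg zero_le_two (arctan_nonneg.2 hu))
  linarith

end Real

theorem rho_of_half_lt {x : ℝ} (hx : 1 / 2 < x) :
    rho x = 2 / π * (arctan (1 / √(2 * x - 1)) - √(2 * x - 1) / (2 * x)) := by
  rw [rho, if_neg (by linarith), if_neg hx.not_ge]

theorem rho_eqOn_Icc : EqOn rho (fun _ => 1) (Icc 0 (1 / 2)) := fun x hx => by
  rw [rho, if_neg hx.1.not_gt, if_pos hx.2]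

theorem sqrt_div_le_arctan_one_div_sqrt {x : ℝ} (hx : 1 / 2 < x) :
    √(2 * x - 1) / (2 * x) ≤ arctan (1 / √(2 * x - 1)) := by
  have hs : 0 < √(2 * x - 1) := sqrt_pos.2 (by linarith)
  convert div_one_add_sq_le_arctan (one_div_pos.2 hs).le using 1
  field_simp
  rw [sq_sqrt (by linarith)]
  ring

theorem rho_nonneg (x : ℝ) : 0 ≤ rho x := by
  rcases le_or_gt x (1 / 2) with hx | hx
  · unfold rho; split_ifs <;> norm_num
  rw [rho_of_half_lt hx]
  exact mul_nonneg (by positivity) (sub_nonneg.2 (sqrt_div_le_arctan_one_div_sqrt hx))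

noncomputable def rhoPrimitive (x : ℝ) : ℝ :=
  x - 2 / π * ((x - 1) * arctan √(2 * x - 1) + √(2 * x - 1) / 2)

theorem continuous_rhoPrimitive : Continuous rhoPrimitive := by
  unfold rhoPrimitive
  fun_prop

theorem rhoPrimitive_half : rhoPrimitive (1 / 2) = 1 / 2 := by
  norm_num [rhoPrimitive]

theorem hasDerivAt_rhoPrimitive {x : ℝ} (hx : 1 / 2 < x) : HasDerivAt rhoPrimitive (rho x) x := by
  have hpos : 0 < 2 * x - 1 := by linarith
  have hs : 0 < √(2 * x - 1) := sqrt_pos.2 hpos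
  have hsqrt : HasDerivAt (fun y => √(2 * y - 1)) (1 / √(2 * x - 1)) x := by
    convert (((hasDerivAt_id' x).const_mul 2).sub_const 1).sqrt hpos.ne' using 1
    field_simp
  have hprim : HasDerivAt rhoPrimitive _ x := (hasDerivAt_id' x).sub <|
    ((((hasDerivAt_id' x).sub_const 1).mul hsqrt.arctan).add (hsqrt.div_const 2)).const_mul (2 / π)
  refine hprim.congr_deriv ?_
  have harctan : arctan (1 / √(2 * x - 1)) = π / 2 - arctan √(2 * x - 1) := by
    rw [one_div, arctan_inv_of_pos hs]
  rw [rho_of_half_lt hx, harctan, sq_sqrt hpos.le]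
  field_simp
  linear_combination 2 * x * sq_sqrt hpos.le

theorem rhoPrimitive_eq_one_add {x : ℝ} (hx : 1 / 2 < x) :
    rhoPrimitive x = 1 + 2 / π * ((x - 1) * arctan (1 / √(2 * x - 1)) - √(2 * x - 1) / 2) := by
  rw [rhoPrimitive, one_div, arctan_inv_of_pos (sqrt_pos.2 (by linarith))]
  field_simp
  ring

theorem rhoPrimitive_le_one {x : ℝ} (hx : 1 ≤ x) : rhoPrimitive x ≤ 1 := by
  have hs : 0 < √(2 * x - 1) := sqrt_pos.2 (by linarith)
  have harctan : (x - 1) * arctan (1 / √(2 * x - 1)) ≤ (x - 1) * (1 / √(2 * x - 1)) :=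
    mul_le_mul_of_nonneg_left (arctan_le_self (one_div_pos.2 hs).le) (by linarith)
  have hle : (x - 1) * (1 / √(2 * x - 1)) ≤ √(2 * x - 1) / 2 := by
    rw [mul_one_div, div_le_div_iff₀ hs two_pos, ← sq, sq_sqrt (by linarith)]
    linarith
  rw [rhoPrimitive_eq_one_add (by linarith), add_le_iff_nonpos_right]
  exact mul_nonpos_of_nonneg_of_nonpos (by positivity) (by linarith)

theorem one_sub_le_rhoPrimitive {x : ℝ} (hx : 1 ≤ x) :
    1 - 2 / π * (√(2 * x - 1))⁻¹ ≤ rhoPrimitive x := by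
  have hs : 0 < √(2 * x - 1) := sqrt_pos.2 (by linarith)
  have harctan : (x - 1) * (√(2 * x - 1) / (2 * x)) ≤ (x - 1) * arctan (1 / √(2 * x - 1)) :=
    mul_le_mul_of_nonneg_left (sqrt_div_le_arctan_one_div_sqrt (by linarith)) (by linarith)
  have hle : -(√(2 * x - 1))⁻¹ ≤ (x - 1) * (√(2 * x - 1) / (2 * x)) - √(2 * x - 1) / 2 := by
    have hx0 : 0 < x := by linarith
    rw [neg_le, ← sub_nonneg]
    field_simp
    rw [sq_sqrt (by linarith)]
    linarith
  rw [rhoPrimitive_eq_one_add (by linarith), sub_eq_add_neg, ← mul_neg]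
  gcongr
  linarith

theorem tendsto_rhoPrimitive_atTop : Tendsto rhoPrimitive atTop (𝓝 1) := by
  have hsqrt : Tendsto (fun x => √(2 * x - 1)) atTop atTop :=
    tendsto_sqrt_atTop.comp <| tendsto_atTop_add_const_right _ _ <|
      tendsto_id.const_mul_atTop two_pos
  have hlower : Tendsto (fun x => 1 - 2 / π * (√(2 * x - 1))⁻¹) atTop (𝓝 1) := by
    simpa using (hsqrt.inv_tendsto_atTop.const_mul (2 / π)).const_sub 1
  exact tendsto_of_tendsto_of_tendsto_of_le_of_le' hlower tendsto_const_nhds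
    (eventually_ge_atTop 1 |>.mono fun _ => one_sub_le_rhoPrimitive)
    (eventually_ge_atTop 1 |>.mono fun _ => rhoPrimitive_le_one)

theorem integrableOn_rho_Ioc : IntegrableOn rho (Ioc 0 (1 / 2)) :=
  (integrableOn_const measure_Ioc_lt_top.ne).congr_fun
    (rho_eqOn_Icc.mono Ioc_subset_Icc_self).symm measurableSet_Ioc

theorem setIntegral_rho_Ioc : ∫ x in Ioc 0 (1 / 2), rho x = 1 / 2 := by
  rw [setIntegral_congr_fun measurableSet_Ioc (rho_eqOn_Icc.mono Ioc_subset_Icc_self)]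
  norm_num

theorem integrableOn_rho_Ioi : IntegrableOn rho (Ioi (1 / 2)) :=
  integrableOn_Ioi_deriv_of_nonneg continuous_rhoPrimitive.continuousWithinAt
    (fun _ hx => hasDerivAt_rhoPrimitive hx) (fun x _ => rho_nonneg x) tendsto_rhoPrimitive_atTop

theorem setIntegral_rho_Ioi : ∫ x in Ioi (1 / 2), rho x = 1 / 2 := by
  rw [integral_Ioi_of_hasDerivAt_of_nonneg continuous_rhoPrimitive.continuousWithinAt
    (fun _ hx => hasDerivAt_rhoPrimitive hx) (fun x _ => rho_nonneg x) tendsto_rhoPrimitive_atTop,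
    rhoPrimitive_half]
  norm_num

theorem rho_integral_one : ∫ x in Set.Ioi (0 : ℝ), rho x = 1 := by
  rw [← Ioc_union_Ioi_eq_Ioi (by norm_num : (0 : ℝ) ≤ 1 / 2),
    setIntegral_union (Ioc_disjoint_Ioi le_rfl) measurableSet_Ioi integrableOn_rho_Ioc
      integrableOn_rho_Ioi, setIntegral_rho_Ioc, setIntegral_rho_Ioi]
  norm_num
end

section
/- Let ρ be as above (ρ = 1 on [0,1/2], ρ(x) = (2/π)(arctan(1/√(2x−1)) − √(2x−1)/(2x)) for x > 1/2). Then ∫_0^∞ ρ(y) log|1/2 − y| dy = log(1/2). -/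
open Real MeasureTheory Set Filter Topology

/-!
On `(0, 1/2]` the integrand is `log (1/2 - y)`, integrated directly. On `(1/2, ∞)` substitute
`y = (1 + t²)/2`: since `arctan t⁻¹ = π/2 - arctan t`, `ρ` becomes `(2/π) rhoProfile t`, where
`rhoProfile t = π/2 - arctan t - t/(1 + t²)` has derivative `-2/(1 + t²)²` and satisfies
`0 ≤ t rhoProfile t ≤ 1/(1 + t²)`. One integration by parts against `rhoProfile` reduces
`∫₀^∞ t rhoProfile t (2 log t - log 2) dt` to `∫ t² log t/(1 + t²)² = π/4` and
`∫ t²/(1 + t²)² = π/4`. For the first, `t ↦ 1/t` maps it to `-∫ log t/(1 + t²)²`, while the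
difference of the two has the elementary antiderivative `arctan t - t log t/(1 + t²)`.
-/

lemma Real.arctan_le_self_s15 {x : ℝ} (hx : 0 ≤ x) : arctan x ≤ x := by
  simpa only [tan_arctan] using le_tan (arctan_nonneg.2 hx) (arctan_lt_pi_div_two x)

lemma hasDerivAt_div_one_add_sq (t : ℝ) :
    HasDerivAt (fun t : ℝ => t / (1 + t ^ 2)) ((1 - t ^ 2) / (1 + t ^ 2) ^ 2) t := by
  refine ((hasDerivAt_id' t).div ((hasDerivAt_pow 2 t).const_add 1)
    (by positivity)).congr_deriv ?_
  ring

lemma tendsto_sq_div_one_add_sq_atTop :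
    Tendsto (fun t : ℝ => t ^ 2 / (1 + t ^ 2)) atTop (𝓝 1) := by
  have h : Tendsto (fun t : ℝ => 1 - (1 + t ^ 2)⁻¹) atTop (𝓝 (1 - 0)) :=
    tendsto_const_nhds.sub <| tendsto_inv_atTop_zero.comp <|
      tendsto_atTop_add_const_left _ _ (tendsto_pow_atTop two_ne_zero)
  rw [sub_zero] at h
  refine h.congr fun t => ?_
  field_simp
  ring

lemma tendsto_div_one_add_sq_atTop : Tendsto (fun t : ℝ => t / (1 + t ^ 2)) atTop (𝓝 0) := by
  have h := tendsto_inv_atTop_zero.mul tendsto_sq_div_one_add_sq_atTop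
  rw [zero_mul] at h
  refine h.congr' ?_
  filter_upwards [eventually_ne_atTop 0] with t ht
  field_simp

lemma tendsto_mul_log_div_one_add_sq_atTop :
    Tendsto (fun t : ℝ => t * log t / (1 + t ^ 2)) atTop (𝓝 0) := by
  have h := (tendsto_pow_log_div_mul_add_atTop 1 0 1 one_ne_zero).mul
    tendsto_sq_div_one_add_sq_atTop
  rw [zero_mul] at h
  refine h.congr' ?_
  filter_upwards [eventually_ne_atTop 0] with t ht
  simp only [pow_one, one_mul, add_zero]
  field_simp

lemma integrableOn_Ioi_one_log_add_one_div_sq :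
    IntegrableOn (fun t : ℝ => (log t + 1) / t ^ 2) (Ioi 1) := by
  have hderiv : ∀ t ∈ Ici (1 : ℝ),
      HasDerivAt (fun t => -((log t + 2) / t)) ((log t + 1) / t ^ 2) t := by
    intro t ht
    have ht0 : t ≠ 0 := by linarith [mem_Ici.1 ht]
    refine (((hasDerivAt_log ht0).add_const 2).div (hasDerivAt_id' t) ht0).neg.congr_deriv ?_
    field_simp
    ring
  have hlim : Tendsto (fun t : ℝ => -((log t + 2) / t)) atTop (𝓝 (-(0 + 0))) := by
    refine ((tendsto_pow_log_div_mul_add_atTop 1 0 1 one_ne_zero).add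
      ((tendsto_const_nhds (x := (2 : ℝ))).div_atTop tendsto_id)).neg.congr' ?_
    filter_upwards [eventually_ne_atTop 0] with t ht
    simp only [pow_one, one_mul, add_zero, id]
    ring
  exact integrableOn_Ioi_deriv_of_nonneg' hderiv
    (fun t ht => by have := log_nonneg (le_of_lt (mem_Ioi.1 ht)); positivity) hlim

lemma integrableOn_Ioi_abs_log_add_one_div_one_add_sq :
    IntegrableOn (fun t : ℝ => (|log t| + 1) / (1 + t ^ 2)) (Ioi 0) := by
  have hmeas : AEStronglyMeasurable (fun t : ℝ => (|log t| + 1) / (1 + t ^ 2)) :=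
    (by fun_prop : Measurable fun t : ℝ => (|log t| + 1) / (1 + t ^ 2)).aestronglyMeasurable
  rw [← Ioc_union_Ioi_eq_Ioi zero_le_one]
  refine IntegrableOn.union ?_ ?_
  · have hlog : IntegrableOn (fun t => -log t + 1) (Ioc (0 : ℝ) 1) :=
      (intervalIntegral.intervalIntegrable_log'.neg.add intervalIntegrable_const).1
    refine hlog.mono' hmeas.restrict (ae_restrict_of_forall_mem measurableSet_Ioc ?_)
    rintro t ⟨ht0, ht1⟩
    rw [Real.norm_eq_abs, abs_of_nonneg (by positivity), abs_of_nonpos (log_nonpos ht0.le ht1)]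
    exact div_le_self (by linarith [log_nonpos ht0.le ht1]) (by nlinarith)
  · refine integrableOn_Ioi_one_log_add_one_div_sq.mono' hmeas.restrict
      (ae_restrict_of_forall_mem measurableSet_Ioi ?_)
    intro t ht
    have ht1 : 1 < t := ht
    rw [Real.norm_eq_abs, abs_of_nonneg (by positivity), abs_of_nonneg (log_nonneg ht1.le)]
    gcongr
    · linarith [log_nonneg ht1.le]
    · linarith

lemma integrableOn_Ioi_of_abs_le_log_weight {g : ℝ → ℝ} (hg : AEStronglyMeasurable g) (C : ℝ)
    (hle : ∀ t, 0 < t → |g t| ≤ C * ((|log t| + 1) / (1 + t ^ 2))) :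
    IntegrableOn g (Ioi 0) :=
  (integrableOn_Ioi_abs_log_add_one_div_one_add_sq.const_mul C).mono' hg.restrict
    (ae_restrict_of_forall_mem measurableSet_Ioi hle)

theorem integral_Ioi_inv_sq_smul_comp_inv {E : Type*} [NormedAddCommGroup E] [NormedSpace ℝ E]
    (g : ℝ → E) : ∫ x in Ioi (0 : ℝ), (x ^ 2)⁻¹ • g x⁻¹ = ∫ x in Ioi 0, g x := by
  rw [← integral_comp_rpow_Ioi g (p := -1) (by norm_num)]
  refine setIntegral_congr_fun measurableSet_Ioi fun x hx => ?_
  have hx : 0 < x := hx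
  simp only [abs_neg, abs_one, one_mul, rpow_neg_one]
  rw [show (-1 : ℝ) - 1 = -(2 : ℕ) by norm_num, rpow_neg hx.le, rpow_natCast]

lemma integrableOn_Ioi_sq_div_one_add_sq_sq :
    IntegrableOn (fun t : ℝ => t ^ 2 / (1 + t ^ 2) ^ 2) (Ioi 0) :=
  integrableOn_Ioi_of_abs_le_log_weight (Measurable.aestronglyMeasurable (by fun_prop)) 1
    fun t _ => by
      rw [abs_of_nonneg (by positivity), one_mul, div_le_div_iff₀ (by positivity) (by positivity)]
      nlinarith [abs_nonneg (log t), sq_nonneg t]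

lemma integral_Ioi_sq_div_one_add_sq_sq :
    ∫ t in Ioi (0 : ℝ), t ^ 2 / (1 + t ^ 2) ^ 2 = π / 4 := by
  have hlim : Tendsto (fun t => (arctan t - t / (1 + t ^ 2)) / 2) atTop (𝓝 ((π / 2 - 0) / 2)) :=
    ((tendsto_arctan_atTop.mono_right nhdsWithin_le_nhds).sub
      tendsto_div_one_add_sq_atTop).div_const 2
  have hderiv : ∀ t ∈ Ici (0 : ℝ), HasDerivAt (fun t => (arctan t - t / (1 + t ^ 2)) / 2)
      (t ^ 2 / (1 + t ^ 2) ^ 2) t := by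
    intro t _
    refine (((hasDerivAt_arctan t).sub (hasDerivAt_div_one_add_sq t)).div_const 2).congr_deriv ?_
    field_simp
    ring
  rw [integral_Ioi_of_hasDerivAt_of_nonneg' hderiv (fun t _ => by positivity) hlim]
  simp only [arctan_zero]
  ring

lemma integral_Ioi_log_mul_sq_sub_one_div_one_add_sq_sq :
    ∫ t in Ioi (0 : ℝ), log t * (t ^ 2 - 1) / (1 + t ^ 2) ^ 2 = π / 2 := by
  have hderiv : ∀ t ∈ Ioi (0 : ℝ), HasDerivAt (fun t => arctan t - t * log t / (1 + t ^ 2))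
      (log t * (t ^ 2 - 1) / (1 + t ^ 2) ^ 2) t := by
    intro t ht
    refine ((hasDerivAt_arctan t).sub ((hasDerivAt_mul_log (ne_of_gt ht)).div
      ((hasDerivAt_pow 2 t).const_add 1) (by positivity))).congr_deriv ?_
    field_simp
    ring
  have hcont : Continuous fun t => arctan t - t * log t / (1 + t ^ 2) :=
    continuous_arctan.sub (continuous_mul_log.div (by fun_prop) fun t => by positivity)
  have hnonneg : ∀ t ∈ Ioi (0 : ℝ), 0 ≤ log t * (t ^ 2 - 1) / (1 + t ^ 2) ^ 2 := by
    intro t ht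
    refine div_nonneg ?_ (by positivity)
    rcases le_total t 1 with h | h
    · exact mul_nonneg_of_nonpos_of_nonpos (log_nonpos (le_of_lt ht) h)
        (by nlinarith [mem_Ioi.1 ht])
    · exact mul_nonneg (log_nonneg h) (by nlinarith)
  have hlim := (tendsto_arctan_atTop.mono_right nhdsWithin_le_nhds).sub
    tendsto_mul_log_div_one_add_sq_atTop
  rw [integral_Ioi_of_hasDerivAt_of_nonneg hcont.continuousWithinAt hderiv hnonneg hlim]
  simp

lemma integrableOn_Ioi_sq_mul_log_div_one_add_sq_sq :
    IntegrableOn (fun t : ℝ => t ^ 2 * log t / (1 + t ^ 2) ^ 2) (Ioi 0) :=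
  integrableOn_Ioi_of_abs_le_log_weight (Measurable.aestronglyMeasurable (by fun_prop)) 1
    fun t _ => by
      rw [abs_div, abs_mul, abs_of_nonneg (sq_nonneg t),
        abs_of_nonneg (by positivity : (0 : ℝ) ≤ (1 + t ^ 2) ^ 2), one_mul,
        div_le_div_iff₀ (by positivity) (by positivity)]
      nlinarith [abs_nonneg (log t), sq_nonneg t, mul_nonneg (abs_nonneg (log t)) (sq_nonneg t)]

lemma integrableOn_Ioi_log_div_one_add_sq_sq :
    IntegrableOn (fun t : ℝ => log t / (1 + t ^ 2) ^ 2) (Ioi 0) :=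
  integrableOn_Ioi_of_abs_le_log_weight (Measurable.aestronglyMeasurable (by fun_prop)) 1
    fun t _ => by
      rw [abs_div, abs_of_nonneg (by positivity : (0 : ℝ) ≤ (1 + t ^ 2) ^ 2), one_mul,
        div_le_div_iff₀ (by positivity) (by positivity)]
      nlinarith [abs_nonneg (log t), sq_nonneg t, mul_nonneg (abs_nonneg (log t)) (sq_nonneg t)]

lemma integral_Ioi_sq_mul_log_div_one_add_sq_sq :
    ∫ t in Ioi (0 : ℝ), t ^ 2 * log t / (1 + t ^ 2) ^ 2 = π / 4 := by
  have hsymm : ∫ t in Ioi (0 : ℝ), t ^ 2 * log t / (1 + t ^ 2) ^ 2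
      = -∫ t in Ioi (0 : ℝ), log t / (1 + t ^ 2) ^ 2 := by
    rw [← integral_Ioi_inv_sq_smul_comp_inv, ← integral_neg]
    refine setIntegral_congr_fun measurableSet_Ioi fun t ht => ?_
    have ht : t ≠ 0 := ne_of_gt ht
    simp only [smul_eq_mul, log_inv]
    field_simp
    ring
  have hdiff : (∫ t in Ioi (0 : ℝ), t ^ 2 * log t / (1 + t ^ 2) ^ 2)
      - ∫ t in Ioi (0 : ℝ), log t / (1 + t ^ 2) ^ 2 = π / 2 := by
    rw [← integral_sub integrableOn_Ioi_sq_mul_log_div_one_add_sq_sq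
      integrableOn_Ioi_log_div_one_add_sq_sq, ← integral_Ioi_log_mul_sq_sub_one_div_one_add_sq_sq]
    congr 1
    ext t
    ring
  linarith

noncomputable def rhoProfile (t : ℝ) : ℝ := π / 2 - arctan t - t / (1 + t ^ 2)

lemma hasDerivAt_rhoProfile (t : ℝ) : HasDerivAt rhoProfile (-2 / (1 + t ^ 2) ^ 2) t := by
  refine (((hasDerivAt_arctan t).const_sub (π / 2)).sub
    (hasDerivAt_div_one_add_sq t)).congr_deriv ?_
  field_simp
  ring

lemma continuous_rhoProfile : Continuous rhoProfile :=
  continuous_iff_continuousAt.2 fun t => (hasDerivAt_rhoProfile t).continuousAt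

lemma tendsto_rhoProfile_atTop : Tendsto rhoProfile atTop (𝓝 0) := by
  have h := (tendsto_const_nhds (x := π / 2)).sub
    ((tendsto_arctan_atTop.mono_right nhdsWithin_le_nhds).add tendsto_div_one_add_sq_atTop)
  rw [add_zero, sub_self] at h
  exact h.congr fun t => by rw [rhoProfile, sub_sub]

lemma rhoProfile_nonneg (t : ℝ) : 0 ≤ rhoProfile t := by
  have hanti : StrictAnti rhoProfile := strictAnti_of_deriv_neg fun t => by
    rw [(hasDerivAt_rhoProfile t).deriv]
    exact div_neg_of_neg_of_pos (by norm_num) (by positivity)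
  exact hanti.antitone.le_of_tendsto tendsto_rhoProfile_atTop t

lemma abs_mul_rhoProfile_le {t : ℝ} (ht : 0 ≤ t) : |t * rhoProfile t| ≤ (1 + t ^ 2)⁻¹ := by
  have h : t * (π / 2 - arctan t) ≤ 1 := by
    rcases ht.eq_or_lt with rfl | ht
    · simp
    · rw [← arctan_inv_of_pos ht]
      calc t * arctan t⁻¹ ≤ t * t⁻¹ := by gcongr; exact arctan_le_self_s15 (inv_nonneg.2 ht.le)
        _ = 1 := mul_inv_cancel₀ ht.ne'
  have h1 : (1 + t ^ 2)⁻¹ = 1 - t * (t / (1 + t ^ 2)) := by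
    field_simp
    ring
  rw [abs_of_nonneg (mul_nonneg ht (rhoProfile_nonneg t)), h1, rhoProfile]
  linarith

lemma integrableOn_Ioi_mul_rhoProfile_mul_log :
    IntegrableOn (fun t => t * rhoProfile t * (2 * log t - log 2)) (Ioi 0) := by
  refine integrableOn_Ioi_of_abs_le_log_weight
    (Measurable.aestronglyMeasurable (by unfold rhoProfile; fun_prop)) 2 fun t ht => ?_
  have hlog : |2 * log t - log 2| ≤ 2 * (|log t| + 1) := by
    have := log_two_lt_d9
    have := log_pos one_lt_two
    rw [abs_le]
    constructor <;> cases abs_cases (log t) <;> linarith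
  calc |t * rhoProfile t * (2 * log t - log 2)|
      = |t * rhoProfile t| * |2 * log t - log 2| := abs_mul _ _
    _ ≤ (1 + t ^ 2)⁻¹ * (2 * (|log t| + 1)) :=
      mul_le_mul (abs_mul_rhoProfile_le ht.le) hlog (abs_nonneg _) (by positivity)
    _ = 2 * ((|log t| + 1) / (1 + t ^ 2)) := by ring

lemma tendsto_rhoProfile_mul_atTop (c : ℝ) :
    Tendsto (fun t => rhoProfile t * (t ^ 2 * log t - c * t ^ 2)) atTop (𝓝 0) := by
  have h := (tendsto_mul_log_div_one_add_sq_atTop.sub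
    (tendsto_div_one_add_sq_atTop.const_mul c)).abs
  rw [mul_zero, sub_zero, abs_zero] at h
  refine squeeze_zero_norm' ?_ h
  filter_upwards [eventually_ge_atTop 0] with t ht
  calc ‖rhoProfile t * (t ^ 2 * log t - c * t ^ 2)‖
      = |t * rhoProfile t| * |t * log t - c * t| := by
        rw [Real.norm_eq_abs, ← abs_mul]; congr 1; ring
    _ ≤ (1 + t ^ 2)⁻¹ * |t * log t - c * t| := by
        gcongr; exact abs_mul_rhoProfile_le ht
    _ = |t * log t / (1 + t ^ 2) - c * (t / (1 + t ^ 2))| := by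
        rw [← abs_of_pos (inv_pos.2 (by positivity : (0 : ℝ) < 1 + t ^ 2)), ← abs_mul]
        congr 1
        field_simp

lemma integral_Ioi_mul_rhoProfile_mul_log :
    ∫ t in Ioi (0 : ℝ), t * rhoProfile t * (2 * log t - log 2) = (1 - log 2) * π / 4 := by
  set c := (1 + log 2) / 2
  set F : ℝ → ℝ := fun t => rhoProfile t * (t ^ 2 * log t - c * t ^ 2)
  have hderiv : ∀ t ∈ Ioi (0 : ℝ), HasDerivAt F (t * rhoProfile t * (2 * log t - log 2) -
      (2 * (t ^ 2 * log t / (1 + t ^ 2) ^ 2) - (1 + log 2) * (t ^ 2 / (1 + t ^ 2) ^ 2))) t := by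
    intro t ht
    have hw : HasDerivAt (fun t => t ^ 2 * log t - c * t ^ 2) (t * (2 * log t - log 2)) t := by
      refine (((hasDerivAt_pow 2 t).mul (hasDerivAt_log (ne_of_gt ht))).sub
        ((hasDerivAt_pow 2 t).const_mul c)).congr_deriv ?_
      field_simp
      ring
    refine ((hasDerivAt_rhoProfile t).mul hw).congr_deriv ?_
    field_simp
    ring
  have hcont : Continuous F := continuous_rhoProfile.mul <|
    ((continuous_id.mul continuous_mul_log).congr fun t => by
      simp only [Pi.mul_apply, id]; ring).sub (by fun_prop)
  have hJA : IntegrableOn (fun t => 2 * (t ^ 2 * log t / (1 + t ^ 2) ^ 2) -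
      (1 + log 2) * (t ^ 2 / (1 + t ^ 2) ^ 2)) (Ioi 0) :=
    (integrableOn_Ioi_sq_mul_log_div_one_add_sq_sq.const_mul 2).sub
      (integrableOn_Ioi_sq_div_one_add_sq_sq.const_mul _)
  have h := integral_Ioi_of_hasDerivAt_of_tendsto hcont.continuousWithinAt hderiv
    (integrableOn_Ioi_mul_rhoProfile_mul_log.sub hJA) (tendsto_rhoProfile_mul_atTop c)
  rw [integral_sub integrableOn_Ioi_mul_rhoProfile_mul_log hJA, integral_sub
    (integrableOn_Ioi_sq_mul_log_div_one_add_sq_sq.const_mul 2)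
    (integrableOn_Ioi_sq_div_one_add_sq_sq.const_mul _), integral_const_mul, integral_const_mul,
    integral_Ioi_sq_mul_log_div_one_add_sq_sq, integral_Ioi_sq_div_one_add_sq_sq] at h
  have hF0 : F 0 = 0 := by simp [F]
  rw [hF0] at h
  linarith

lemma rho_of_mem_Icc {y : ℝ} (hy : y ∈ Icc 0 (1 / 2)) : rho y = 1 := by
  rw [rho, if_neg (not_lt.2 hy.1), if_pos hy.2]

lemma rho_one_add_sq_div_two {t : ℝ} (ht : 0 < t) :
    rho ((1 + t ^ 2) / 2) = 2 / π * rhoProfile t := by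
  have hsqrt : √(2 * ((1 + t ^ 2) / 2) - 1) = t := by
    rw [show 2 * ((1 + t ^ 2) / 2) - 1 = t ^ 2 by ring, sqrt_sq ht.le]
  have hpos : ¬ (1 + t ^ 2) / 2 ≤ 1 / 2 := by nlinarith
  rw [rho, if_neg (not_lt.2 (by positivity)), if_neg hpos, hsqrt, one_div, arctan_inv_of_pos ht,
    rhoProfile]
  ring_nf

lemma integrableOn_Ioc_rho_mul_log :
    IntegrableOn (fun y => rho y * log |1 / 2 - y|) (Ioc 0 (1 / 2)) := by
  have h := (intervalIntegral.intervalIntegrable_log'.comp_sub_left (1 / 2 : ℝ)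
    (a := 1 / 2) (b := 0))
  rw [sub_self, sub_zero, intervalIntegrable_iff_integrableOn_Ioc_of_le (by norm_num)] at h
  refine h.congr_fun (fun y hy => ?_) measurableSet_Ioc
  rw [rho_of_mem_Icc (Ioc_subset_Icc_self hy), one_mul, log_abs]

lemma integral_Ioc_rho_mul_log :
    ∫ y in Ioc 0 (1 / 2), rho y * log |1 / 2 - y| = (log (1 / 2) - 1) / 2 := by
  rw [setIntegral_congr_fun measurableSet_Ioc fun y hy => by
      rw [rho_of_mem_Icc (Ioc_subset_Icc_self hy), one_mul, log_abs],
    ← intervalIntegral.integral_of_le (by norm_num),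
    intervalIntegral.integral_comp_sub_left (fun y => log y), integral_log]
  norm_num
  ring

section OneAddSqDivTwo

variable {E : Type*} [NormedAddCommGroup E] [NormedSpace ℝ E]

lemma image_one_add_sq_div_two_Ioi : (fun t : ℝ => (1 + t ^ 2) / 2) '' Ioi 0 = Ioi (1 / 2) := by
  ext y
  constructor
  · rintro ⟨t, ht, rfl⟩
    simp only [mem_Ioi] at ht ⊢
    nlinarith
  · intro hy
    have hy : 0 < 2 * y - 1 := by linarith [mem_Ioi.1 hy]
    refine ⟨√(2 * y - 1), sqrt_pos.2 hy, ?_⟩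
    show (1 + √(2 * y - 1) ^ 2) / 2 = y
    rw [sq_sqrt hy.le]
    ring

lemma injOn_one_add_sq_div_two : InjOn (fun t : ℝ => (1 + t ^ 2) / 2) (Ioi 0) :=
  fun a ha b hb h => (sq_eq_sq₀ (le_of_lt ha) (le_of_lt hb)).1 (by simp only at h; linarith)

lemma hasDerivAt_one_add_sq_div_two (t : ℝ) : HasDerivAt (fun t : ℝ => (1 + t ^ 2) / 2) t t := by
  refine (((hasDerivAt_pow 2 t).const_add 1).div_const 2).congr_deriv ?_
  ring

theorem integral_comp_one_add_sq_div_two_Ioi (g : ℝ → E) :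
    ∫ t in Ioi (0 : ℝ), t • g ((1 + t ^ 2) / 2) = ∫ y in Ioi (1 / 2), g y := by
  rw [← image_one_add_sq_div_two_Ioi, integral_image_eq_integral_abs_deriv_smul measurableSet_Ioi
    (fun t _ => (hasDerivAt_one_add_sq_div_two t).hasDerivWithinAt) injOn_one_add_sq_div_two]
  exact setIntegral_congr_fun measurableSet_Ioi fun t ht => by rw [abs_of_pos ht]

theorem integrableOn_comp_one_add_sq_div_two_Ioi_iff (g : ℝ → E) :
    IntegrableOn (fun t => t • g ((1 + t ^ 2) / 2)) (Ioi 0) ↔ IntegrableOn g (Ioi (1 / 2)) := by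
  rw [← image_one_add_sq_div_two_Ioi, integrableOn_image_iff_integrableOn_abs_deriv_smul
    measurableSet_Ioi (fun t _ => (hasDerivAt_one_add_sq_div_two t).hasDerivWithinAt)
    injOn_one_add_sq_div_two]
  exact integrableOn_congr_fun (fun t ht => by rw [abs_of_pos ht]) measurableSet_Ioi

end OneAddSqDivTwo

lemma smul_rho_mul_log_one_add_sq_div_two {t : ℝ} (ht : 0 < t) :
    t • (rho ((1 + t ^ 2) / 2) * log |1 / 2 - (1 + t ^ 2) / 2|)
      = 2 / π * (t * rhoProfile t * (2 * log t - log 2)) := by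
  have hlog : log |1 / 2 - (1 + t ^ 2) / 2| = 2 * log t - log 2 := by
    rw [show 1 / 2 - (1 + t ^ 2) / 2 = -(t ^ 2 / 2) by ring, abs_neg, abs_of_pos (by positivity),
      log_div (by positivity) two_ne_zero, log_pow]
    norm_num
  rw [smul_eq_mul, rho_one_add_sq_div_two ht, hlog]
  ring

lemma integrableOn_Ioi_rho_mul_log :
    IntegrableOn (fun y => rho y * log |1 / 2 - y|) (Ioi (1 / 2)) := by
  rw [← integrableOn_comp_one_add_sq_div_two_Ioi_iff]
  exact IntegrableOn.congr_fun (integrableOn_Ioi_mul_rhoProfile_mul_log.const_mul (2 / π))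
    (fun t ht => (smul_rho_mul_log_one_add_sq_div_two ht).symm) measurableSet_Ioi

lemma integral_Ioi_rho_mul_log :
    ∫ y in Ioi (1 / 2), rho y * log |1 / 2 - y| = (1 - log 2) / 2 := by
  rw [← integral_comp_one_add_sq_div_two_Ioi, setIntegral_congr_fun measurableSet_Ioi
    fun t ht => smul_rho_mul_log_one_add_sq_div_two ht, integral_const_mul,
    integral_Ioi_mul_rhoProfile_mul_log]
  field_simp
  ring

theorem rho_log_half :
    ∫ y in Set.Ioi (0 : ℝ), rho y * Real.log |1 / 2 - y| = Real.log (1 / 2) := by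
  rw [← Ioc_union_Ioi_eq_Ioi (by norm_num : (0 : ℝ) ≤ 1 / 2),
    setIntegral_union (Ioc_disjoint_Ioi le_rfl) measurableSet_Ioi integrableOn_Ioc_rho_mul_log
      integrableOn_Ioi_rho_mul_log,
    integral_Ioc_rho_mul_log, integral_Ioi_rho_mul_log, one_div, log_inv]
  ring
end
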